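/- Let ℓ ≥ 1 and k ≥ 2, let i ∈ Fin k, and let v be a vertex of ST^ℓ_k with v 0 ≠ i. Then the map h ↦ v ∘ (Equiv.swap 0 h) is a bijection from the set {h ∈ Fin (k·ℓ) : h ≠ 0 and v h = i} of positions of v carrying the value i onto the set N(v) ∩ S_i of neighbors of v lying in S_i. -/
import Mathlib


/-- An ℓ-set permutation: a string of length `k * l` over the alphabet `Fin k`
in which every symbol occurs exactly `l` times. -/
abbrev LSetPerm (k l : ℕ) : Type :=
  {v : Fin (k * l) → Fin k // ∀ j : Fin k, (Finset.univ.filter fun x => v x = j).card = l}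

/-- The star ℓ-set transposition graph `ST^ℓ_k`: vertices are the ℓ-set permutations,
with `v` adjacent to `w` iff `w` is obtained from `v` by transposing the first entry
with an entry of differing value. -/
def STGraph (k l : ℕ) [NeZero (k * l)] : SimpleGraph (LSetPerm k l) :=
  SimpleGraph.fromRel fun v w =>
    ∃ h : Fin (k * l), h ≠ 0 ∧ v.1 h ≠ v.1 0 ∧ w.1 = v.1 ∘ (Equiv.swap 0 h)

/-- for a vertex `v` with `v 0 ≠ i`, the map `h ↦ v ∘ (swap 0 h)` is a
bijection from the positions `h ≠ 0` with `v h = i` onto the set `N(v) ∩ S_i` of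
neighbors of `v` lying in `S_i`. -/
theorem ST_swap_bijection (k l : ℕ) (hl : 1 ≤ l) (hk : 2 ≤ k) (i : Fin k)
    (v : LSetPerm k l) :
    letI : NeZero (k * l) := ⟨Nat.mul_ne_zero (by omega) (by omega)⟩
    v.1 0 ≠ i →
      ∃ e : {h : Fin (k * l) // h ≠ 0 ∧ v.1 h = i} ≃
            {w : LSetPerm k l // (STGraph k l).Adj v w ∧ w.1 0 = i},
        ∀ h, (e h).1.1 = v.1 ∘ Equiv.swap 0 h.1 := by
  haveI : NeZero (k * l) := ⟨Nat.mul_ne_zero (by omega) (by omega)⟩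
  intro hv0
  have count : ∀ (e : Equiv.Perm (Fin (k * l))) (j : Fin k),
      (Finset.univ.filter fun x => (v.1 ∘ e) x = j).card = l := by
    intro e j
    refine (Finset.card_bij (fun x _ => e x)
      (fun x hx => by simpa using (Finset.mem_filter.mp hx).2)
      (fun a _ b _ hab => e.injective hab)
      (fun b hb => ⟨e.symm b, by
        simp only [Finset.mem_filter, Finset.mem_univ, true_and, Function.comp_apply,
          Equiv.apply_symm_apply]
        exact (Finset.mem_filter.mp hb).2, by simp⟩)).trans (v.2 j)
  have adjpf : ∀ h : {h : Fin (k * l) // h ≠ 0 ∧ v.1 h = i},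
      (STGraph k l).Adj v ⟨v.1 ∘ Equiv.swap 0 h.1, fun j => count _ j⟩ ∧
      (⟨v.1 ∘ Equiv.swap 0 h.1, fun j => count _ j⟩ : LSetPerm k l).1 0 = i := by
    intro h
    refine ⟨⟨?_, Or.inl ⟨h.1, h.2.1, ?_, rfl⟩⟩, ?_⟩
    · intro hvw
      have := congrFun (congrArg Subtype.val hvw) 0
      simp only [Function.comp_apply, Equiv.swap_apply_left] at this
      exact hv0 (this.trans h.2.2)
    · rw [h.2.2]; exact fun hc => hv0 hc.symm
    · simp [h.2.2]
  refine ⟨Equiv.ofBijective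
    (fun h => ⟨⟨v.1 ∘ Equiv.swap 0 h.1, fun j => count _ j⟩, adjpf h⟩) ⟨?_, ?_⟩,
    fun h => rfl⟩
  · intro h1 h2 heq
    have heq' : v.1 ∘ Equiv.swap 0 h1.1 = v.1 ∘ Equiv.swap 0 h2.1 :=
      congrArg Subtype.val (congrArg Subtype.val heq)
    apply Subtype.ext
    by_contra hne
    have := congrFun heq' h1.1
    simp only [Function.comp_apply, Equiv.swap_apply_right] at this
    rw [Equiv.swap_apply_of_ne_of_ne h1.2.1 hne] at this
    exact hv0 (this.trans h1.2.2)
  · rintro ⟨w, hadj, hw0⟩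
    rcases hadj with ⟨hne, hrel | hrel⟩
    · obtain ⟨h, hh0, hval, heq⟩ := hrel
      have hvh : v.1 h = i := by
        have := congrFun heq 0
        simp only [Function.comp_apply, Equiv.swap_apply_left] at this
        rw [hw0] at this; exact this.symm
      exact ⟨⟨h, hh0, hvh⟩, Subtype.ext (Subtype.ext heq.symm)⟩
    · obtain ⟨h, hh0, hval, heq⟩ := hrel
      have hwv : w.1 = v.1 ∘ Equiv.swap 0 h := by
        funext x
        have := congrFun heq (Equiv.swap 0 h x)
        simpa [Equiv.swap_apply_self] using this.symm
      have hvh : v.1 h = i := by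
        have := congrFun heq h
        simp only [Function.comp_apply, Equiv.swap_apply_right] at this
        rw [hw0] at this; exact this
      exact ⟨⟨h, hh0, hvh⟩, Subtype.ext (Subtype.ext hwv.symm)⟩
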